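/- Fix real numbers a < b and integers m, r, l ≥ 1. Under the hypotheses of the convergence theorem for characteristic matrices — namely: continuous coefficient matrices A_j(·,k) → A_j uniformly on [a,b] for each j ∈ {0,…,r−1}, fundamental matrix solutions Y_i(·,k) and Y_i with initial data Y^{(j−1)}(a) = δ_{ij} I_m, and continuous linear operators B_k, B : C([a,b], ℂ^{rm}) → ℂ^l with B_k u → B u for every u — the characteristic matrices M_k, M ∈ ℂ^{l×rm} satisfy, for all sufficiently large k: dim ker M_k ≤ dim ker M and dim coker M_k ≤ dim coker M. -/

import Mathlib

/-!
The jet `(Y, Y', …, Y⁽ʳ⁻¹⁾)` of a solution of `Y⁽ʳ⁾ + ∑ Aⱼ Y⁽ʲ⁾ = 0` solves the first-order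
system `u' = C(A(t)) u`, where `C(A)` is the companion operator. Grönwall's inequality turns
uniform convergence of the coefficients into uniform convergence of the jets on `[a,b]`, i.e.
convergence in `C([a,b], ℂ^{rm})` of the arguments at which the boundary operators are evaluated.
By Banach–Steinhaus the `B_k` are uniformly bounded, so strong convergence `B_k → B` suffices to
get `M_k → M`. Rank is lower semicontinuous, so `rank M ≤ rank M_k` eventually, and rank–nullity
bounds the kernel and the cokernel of `M_k` by those of `M`.
-/

attribute [local instance] Matrix.normedAddCommGroup Matrix.normedSpace

open scoped Classical in
/-- The jet `J(y) = (y, y', …, y⁽ʳ⁻¹⁾)` of a function `y : ℝ → ℂ^m`, as a continuous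
map on `[a,b]` with values in `ℂ^{rm}` (junk value `0` if the jet fails to be
continuous, which does not happen for `(r-1)`-times continuously differentiable `y`). -/
noncomputable def jetCM (a b : ℝ) {m : ℕ} (r : ℕ) (y : ℝ → Fin m → ℂ) :
    C(Set.Icc a b, Fin r × Fin m → ℂ) :=
  if h : Continuous fun t : Set.Icc a b =>
      fun p : Fin r × Fin m => iteratedDeriv (p.1 : ℕ) y t.1 p.2
  then ⟨_, h⟩ else 0

/-- The characteristic matrix `M(L,B) = ([BY₁], …, [BY_r]) ∈ ℂ^{l × rm}`: its column
indexed by `(i,j)` is `B` applied to the jet of the `j`-th column of `Y_i`. -/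
noncomputable def charMatrix {m r l : ℕ} (a b : ℝ)
    (B : C(Set.Icc a b, Fin r × Fin m → ℂ) →L[ℂ] (Fin l → ℂ))
    (Y : Fin r → ℝ → Matrix (Fin m) (Fin m) ℂ) :
    Matrix (Fin l) (Fin r × Fin m) ℂ :=
  Matrix.of fun (q : Fin l) (p : Fin r × Fin m) =>
    B (jetCM a b r (fun t v => Y p.1 t v p.2)) q

open Filter Topology Set

namespace Matrix

theorem eventually_rank_le_of_tendsto {𝕜 m n α : Type*} [NontriviallyNormedField 𝕜]
    [CompleteSpace 𝕜] [Fintype m] [Fintype n] [DecidableEq n] {l : Filter α}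
    {M : α → Matrix m n 𝕜} {M₀ : Matrix m n 𝕜} (h : Tendsto M l (𝓝 M₀)) :
    ∀ᶠ k in l, M₀.rank ≤ (M k).rank := by
  let φ : Matrix m n 𝕜 →ₗ[𝕜] (n → 𝕜) →L[𝕜] (m → 𝕜) :=
    LinearMap.toContinuousLinearMap.toLinearMap ∘ₗ toLin'.toLinearMap
  have hφ : Tendsto (fun k => φ (M k)) l (𝓝 (φ M₀)) :=
    (φ.continuous_of_finiteDimensional.tendsto M₀).comp h
  have hrank : ∀ N : Matrix m n 𝕜, ((φ N : (n → 𝕜) →ₗ[𝕜] (m → 𝕜)).rank) = N.rank :=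
    fun N => (Module.finrank_eq_rank ..).symm
  filter_upwards [hφ ((isOpen_setOfPred_nat_le_rank M₀.rank).mem_nhds (by simp [hrank]))]
    with k hk
  simpa [hrank] using hk

theorem finrank_ker_mulVecLin_le_of_rank_le {K m n : Type*} [Field K] [Fintype n]
    {M N : Matrix m n K} (h : M.rank ≤ N.rank) :
    Module.finrank K (LinearMap.ker N.mulVecLin) ≤
      Module.finrank K (LinearMap.ker M.mulVecLin) := by
  have hM := LinearMap.finrank_range_add_finrank_ker M.mulVecLin
  have hN := LinearMap.finrank_range_add_finrank_ker N.mulVecLin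
  unfold rank at h
  omega

theorem finrank_quotient_range_mulVecLin_le_of_rank_le {K m n : Type*} [Field K] [Fintype m]
    [Fintype n] {M N : Matrix m n K} (h : M.rank ≤ N.rank) :
    Module.finrank K ((m → K) ⧸ LinearMap.range N.mulVecLin) ≤
      Module.finrank K ((m → K) ⧸ LinearMap.range M.mulVecLin) := by
  have hM := Submodule.finrank_quotient_add_finrank (LinearMap.range M.mulVecLin)
  have hN := Submodule.finrank_quotient_add_finrank (LinearMap.range N.mulVecLin)
  unfold rank at h
  omega

end Matrix

theorem ContinuousLinearMap.tendsto_apply_of_tendsto_pointwise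
    {𝕜 E F : Type*} [NontriviallyNormedField 𝕜] [NormedAddCommGroup E] [NormedSpace 𝕜 E]
    [CompleteSpace E] [NormedAddCommGroup F] [NormedSpace 𝕜 F]
    {T : ℕ → E →L[𝕜] F} {T₀ : E →L[𝕜] F} (hT : ∀ x, Tendsto (fun k => T k x) atTop (𝓝 (T₀ x)))
    {x : ℕ → E} {x₀ : E} (hx : Tendsto x atTop (𝓝 x₀)) :
    Tendsto (fun k => T k (x k)) atTop (𝓝 (T₀ x₀)) := by
  obtain ⟨C, hC⟩ : ∃ C, ∀ k, ‖T k‖ ≤ C := banach_steinhaus fun y => by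
    obtain ⟨c, hc⟩ := (hT y).norm.bddAbove_range
    exact ⟨c, fun k => hc (mem_range_self k)⟩
  have hsmall : Tendsto (fun k => T k (x k - x₀)) atTop (𝓝 0) := by
    refine squeeze_zero_norm (fun k => ((T k).le_opNorm _).trans
      (mul_le_mul_of_nonneg_right (hC k) (norm_nonneg _))) ?_
    simpa using (tendsto_iff_norm_sub_tendsto_zero.1 hx).const_mul C
  simpa using hsmall.add (hT x₀)

theorem tendstoUniformlyOn_pi_iff {ι α κ : Type*} {β : ι → Type*} [∀ i, UniformSpace (β i)]
    {p : Filter κ} {s : Set α} {F : κ → α → ∀ i, β i} {f : α → ∀ i, β i} :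
    TendstoUniformlyOn F f p s ↔
      ∀ i, TendstoUniformlyOn (fun k x => F k x i) (fun x => f x i) p s := by
  simp only [tendstoUniformlyOn_iff_tendsto, Pi.uniformity, tendsto_iInf, tendsto_comap_iff]
  rfl

theorem exists_pos_gronwallBound_lt (K C x : ℝ) {ε : ℝ} (hε : 0 < ε) :
    ∃ δ > 0, gronwallBound 0 K (δ * C) x < ε := by
  have hlim : Tendsto (fun δ => gronwallBound 0 K (δ * C) x) (𝓝 0) (𝓝 0) := by
    simpa [Function.comp_def, gronwallBound_ε0_δ0] using
      ((gronwallBound_continuous_ε 0 K x).comp (continuous_mul_const C)).tendsto 0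
  have hsmall : ∀ᶠ δ in 𝓝[>] 0, gronwallBound 0 K (δ * C) x < ε :=
    nhdsWithin_le_nhds (hlim.eventually (gt_mem_nhds hε))
  exact (eventually_mem_nhdsWithin.and hsmall).exists

theorem tendstoUniformlyOn_of_linear_ODE {X : Type*} [NormedAddCommGroup X] [NormedSpace ℝ X]
    {a b : ℝ} {L : ℝ → X →L[ℝ] X} {Lseq : ℕ → ℝ → X →L[ℝ] X} {u : ℝ → X} {useq : ℕ → ℝ → X}
    (hL : ContinuousOn L (Icc a b)) (hLseq : TendstoUniformlyOn Lseq L atTop (Icc a b))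
    (hu : ∀ t, HasDerivAt u (L t (u t)) t)
    (huseq : ∀ k t, HasDerivAt (useq k) (Lseq k t (useq k t)) t)
    (hinit : ∀ k, useq k a = u a) :
    TendstoUniformlyOn useq u atTop (Icc a b) := by
  have hu_cont : Continuous u := continuous_iff_continuousAt.2 fun t => (hu t).continuousAt
  obtain ⟨CL, hCL⟩ := isCompact_Icc.exists_bound_of_continuousOn hL
  obtain ⟨Cu, hCu⟩ := (isCompact_Icc (a := a) (b := b)).exists_bound_of_continuousOn
    hu_cont.continuousOn
  set C := max Cu 0
  set K := (CL + 1).toNNReal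
  rw [Metric.tendstoUniformlyOn_iff]
  intro ε hε
  obtain ⟨δ, hδ, hδε⟩ := exists_pos_gronwallBound_lt K C (b - a) hε
  filter_upwards [Metric.tendstoUniformlyOn_iff.1 hLseq δ hδ,
    Metric.tendstoUniformlyOn_iff.1 hLseq 1 one_pos] with k hk hk1 t ht
  have hclose : ∀ {η}, (∀ x ∈ Icc a b, dist (L x) (Lseq k x) < η) →
      ∀ s ∈ Ico a b, ‖Lseq k s - L s‖ < η := fun h s hs => by
    simpa [dist_eq_norm'] using h s (Ico_subset_Icc_self hs)
  have hlip : ∀ s ∈ Ico a b, LipschitzOnWith K (Lseq k s) univ := fun s hs =>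
    ((Lseq k s).lipschitz.weaken <| NNReal.le_toNNReal_of_coe_le <| by
      rw [coe_nnnorm]
      linarith [norm_le_norm_add_norm_sub' (Lseq k s) (L s), hclose hk1 s hs,
        hCL s (Ico_subset_Icc_self hs)]).lipschitzOnWith
  have herr : ∀ s ∈ Ico a b, dist (L s (u s)) (Lseq k s (u s)) ≤ δ * C := fun s hs => by
    rw [dist_eq_norm', ← ContinuousLinearMap.sub_apply']
    exact ((Lseq k s - L s).le_opNorm _).trans (mul_le_mul (hclose hk s hs).le
      ((hCu s (Ico_subset_Icc_self hs)).trans (le_max_left _ _)) (norm_nonneg _) hδ.le)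
  -- `useq k` solves `v' = Lseq k t v` exactly and `u` solves it up to an error `≤ δ * C`.
  have hdist := dist_le_of_approx_trajectories_ODE_of_mem hlip
    (continuous_iff_continuousAt.2 fun t => (huseq k t).continuousAt).continuousOn
    (fun s _ => (huseq k s).hasDerivWithinAt) (fun s _ => (dist_self _).le) (fun _ _ => trivial)
    hu_cont.continuousOn (fun s _ => (hu s).hasDerivWithinAt) herr (fun _ _ => trivial)
    (dist_le_zero.2 (hinit k)) t ht
  rw [dist_comm]
  calc dist (useq k t) (u t) ≤ gronwallBound 0 K (0 + δ * C) (t - a) := hdist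
    _ ≤ gronwallBound 0 K (δ * C) (b - a) := by
      rw [zero_add]
      exact gronwallBound_mono le_rfl (by positivity) K.2 (by linarith [ht.2])
    _ < ε := hδε

section Companion

variable {n : Type*} [Fintype n] {r : ℕ}

local notation "X" => Fin r → Matrix n n ℂ

noncomputable def companionShift : X →L[ℝ] X :=
  LinearMap.toContinuousLinearMap
    { toFun := fun V j => if h : (j : ℕ) + 1 < r then V ⟨j + 1, h⟩ else 0
      map_add' := fun V W => by
        funext j; by_cases h : (j : ℕ) + 1 < r <;> simp [h]
      map_smul' := fun c V => by
        funext j; by_cases h : (j : ℕ) + 1 < r <;> simp [h] }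

noncomputable def companionLastRow : (Fin r → Matrix n n ℂ) →L[ℝ] X →L[ℝ] X :=
  LinearMap.toContinuousLinearMap <| LinearMap.toContinuousLinearMap.toLinearMap ∘ₗ
    LinearMap.mk₂ ℝ (fun A V j => if (j : ℕ) + 1 = r then ∑ i, A i * V i else 0)
      (fun A A' V => by
        funext j; by_cases h : (j : ℕ) + 1 = r <;> simp [h, add_mul, Finset.sum_add_distrib])
      (fun c A V => by
        funext j; by_cases h : (j : ℕ) + 1 = r <;> simp [h, Finset.smul_sum])
      (fun A V V' => by
        funext j; by_cases h : (j : ℕ) + 1 = r <;> simp [h, mul_add, Finset.sum_add_distrib])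
      (fun c A V => by
        funext j; by_cases h : (j : ℕ) + 1 = r <;> simp [h, Finset.smul_sum])

/-- Written as a constant plus a part linear in `A`, so that it is visibly uniformly continuous
in `A`; `companion_apply` gives the usual description. -/
noncomputable def companion (A : Fin r → Matrix n n ℂ) : X →L[ℝ] X :=
  companionShift - companionLastRow A

theorem companion_apply (A : Fin r → Matrix n n ℂ) (V : X) (j : Fin r) :
    companion A V j = if h : (j : ℕ) + 1 < r then V ⟨j + 1, h⟩ else -∑ i, A i * V i := by
  by_cases h : (j : ℕ) + 1 < r
  · simp [companion, companionShift, companionLastRow, h, h.ne]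
  · have hlast : (j : ℕ) + 1 = r := by omega
    simp [companion, companionShift, companionLastRow, hlast]

theorem uniformContinuous_companion : UniformContinuous (companion (n := n) (r := r)) :=
  uniformContinuous_const.sub companionLastRow.uniformContinuous

noncomputable def jet (r : ℕ) (Y : ℝ → Matrix n n ℂ) (t : ℝ) : Fin r → Matrix n n ℂ :=
  fun j => iteratedDeriv j Y t

theorem hasDerivAt_jet {A : Fin r → ℝ → Matrix n n ℂ} {Y : ℝ → Matrix n n ℂ}
    (hY : ContDiff ℝ r Y)
    (hode : ∀ t, iteratedDeriv r Y t + ∑ j : Fin r, A j t * iteratedDeriv j Y t = 0) (t : ℝ) :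
    HasDerivAt (jet r Y) (companion (fun j => A j t) (jet r Y t)) t := by
  refine hasDerivAt_pi.2 fun j => ?_
  have hderiv : HasDerivAt (iteratedDeriv j Y) (iteratedDeriv (j + 1) Y t) t := by
    rw [iteratedDeriv_succ]
    exact ((hY.differentiable_iteratedDeriv j (by exact_mod_cast j.2)) t).hasDerivAt
  rw [companion_apply]
  split_ifs with h
  · exact hderiv
  · have hlast : (j : ℕ) + 1 = r := by omega
    rw [hlast, eq_neg_of_add_eq_zero_left (hode t)] at hderiv
    exact hderiv

theorem tendstoUniformlyOn_jet {a b : ℝ} {A : Fin r → ℝ → Matrix n n ℂ}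
    {Aseq : ℕ → Fin r → ℝ → Matrix n n ℂ} (hA : ∀ j, Continuous (A j))
    (hAconv : ∀ j, TendstoUniformlyOn (fun k t => Aseq k j t) (A j) atTop (Icc a b))
    {Y : ℝ → Matrix n n ℂ} {Yseq : ℕ → ℝ → Matrix n n ℂ}
    (hY : ContDiff ℝ r Y) (hYseq : ∀ k, ContDiff ℝ r (Yseq k))
    (hode : ∀ t, iteratedDeriv r Y t + ∑ j : Fin r, A j t * iteratedDeriv j Y t = 0)
    (hodeseq : ∀ k t, iteratedDeriv r (Yseq k) t +
      ∑ j : Fin r, Aseq k j t * iteratedDeriv j (Yseq k) t = 0)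
    (hinit : ∀ k, ∀ j : Fin r, iteratedDeriv j (Yseq k) a = iteratedDeriv j Y a) :
    TendstoUniformlyOn (fun k => jet r (Yseq k)) (jet r Y) atTop (Icc a b) :=
  tendstoUniformlyOn_of_linear_ODE
    (uniformContinuous_companion.continuous.comp (continuous_pi hA)).continuousOn
    (uniformContinuous_companion.comp_tendstoUniformlyOn (tendstoUniformlyOn_pi_iff.2 hAconv))
    (hasDerivAt_jet hY hode) (fun k => hasDerivAt_jet (hYseq k) (hodeseq k))
    (fun k => funext (hinit k))

end Companion

theorem ContinuousLinearMap.iteratedDeriv_comp_left {F G : Type*} [NormedAddCommGroup F]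
    [NormedSpace ℝ F] [NormedAddCommGroup G] [NormedSpace ℝ G] (g : F →L[ℝ] G) {f : ℝ → F}
    {N : ℕ∞} (hf : ContDiff ℝ N f) {i : ℕ} (hi : i ≤ N) (x : ℝ) :
    iteratedDeriv i (g ∘ f) x = g (iteratedDeriv i f x) := by
  simp only [iteratedDeriv_eq_iteratedFDeriv, g.iteratedFDeriv_comp_left hf.contDiffAt
    (by exact_mod_cast hi)]
  rfl

theorem jetCM_col_eq {a b : ℝ} {m r : ℕ} {Y : ℝ → Matrix (Fin m) (Fin m) ℂ}
    (hY : ContDiff ℝ r Y) (c : Fin m) :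
    ⇑(jetCM a b r fun s v => Y s v c) = fun (t : Icc a b) p => jet r Y t p.1 p.2 c := by
  let col : Matrix (Fin m) (Fin m) ℂ →L[ℝ] (Fin m → ℂ) :=
    ContinuousLinearMap.pi fun v =>
      (ContinuousLinearMap.proj (R := ℝ) (φ := fun _ : Fin m => ℂ) c).comp
        (ContinuousLinearMap.proj (R := ℝ) (φ := fun _ : Fin m => Fin m → ℂ) v)
  have hcol : ∀ i : Fin r, iteratedDeriv i (col ∘ Y) = col ∘ iteratedDeriv i Y := fun i =>
    funext (col.iteratedDeriv_comp_left hY (by exact_mod_cast i.2.le))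
  have hcont : Continuous fun t : Icc a b =>
      fun p : Fin r × Fin m => iteratedDeriv p.1 (fun s v => Y s v c) t.1 p.2 := by
    change Continuous fun t : Icc a b =>
      fun p : Fin r × Fin m => iteratedDeriv p.1 (col ∘ Y) t.1 p.2
    simp only [hcol]
    exact continuous_pi fun p => ((continuous_apply p.2).comp (col.continuous.comp
      (hY.continuous_iteratedDeriv p.1 (by exact_mod_cast p.1.2.le)))).comp
        continuous_subtype_val
  rw [jetCM, dif_pos hcont]
  funext t p
  change iteratedDeriv p.1 (col ∘ Y) t.1 p.2 = _
  rw [hcol]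
  rfl

theorem tendsto_jetCM_col {a b : ℝ} {m r : ℕ} {Y : ℝ → Matrix (Fin m) (Fin m) ℂ}
    {Yseq : ℕ → ℝ → Matrix (Fin m) (Fin m) ℂ} (hY : ContDiff ℝ r Y)
    (hYseq : ∀ k, ContDiff ℝ r (Yseq k))
    (h : TendstoUniformlyOn (fun k => jet r (Yseq k)) (jet r Y) atTop (Icc a b)) (c : Fin m) :
    Tendsto (fun k => jetCM a b r fun t v => Yseq k t v c) atTop
      (𝓝 (jetCM a b r fun t v => Y t v c)) := by
  have hentry : UniformContinuous
      fun (V : Fin r → Matrix (Fin m) (Fin m) ℂ) (p : Fin r × Fin m) => V p.1 p.2 c :=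
    uniformContinuous_pi.2 fun p =>
      .comp (Pi.uniformContinuous_proj _ c) (.comp (Pi.uniformContinuous_proj _ p.2)
        (Pi.uniformContinuous_proj _ p.1))
  rw [ContinuousMap.tendsto_iff_tendstoUniformly]
  simp only [jetCM_col_eq hY, jetCM_col_eq (hYseq _)]
  exact hentry.comp_tendstoUniformly (tendstoUniformlyOn_iff_tendstoUniformly_comp_coe.1 h)

theorem tendsto_charMatrix {a b : ℝ} {m r l : ℕ}
    {B : C(Icc a b, Fin r × Fin m → ℂ) →L[ℂ] (Fin l → ℂ)}
    {Bseq : ℕ → C(Icc a b, Fin r × Fin m → ℂ) →L[ℂ] (Fin l → ℂ)}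
    (hB : ∀ u, Tendsto (fun k => Bseq k u) atTop (𝓝 (B u)))
    {Y : Fin r → ℝ → Matrix (Fin m) (Fin m) ℂ} {Yseq : ℕ → Fin r → ℝ → Matrix (Fin m) (Fin m) ℂ}
    (hY : ∀ (i : Fin r) (c : Fin m), Tendsto (fun k => jetCM a b r fun t v => Yseq k i t v c)
      atTop (𝓝 (jetCM a b r fun t v => Y i t v c))) :
    Tendsto (fun k => charMatrix a b (Bseq k) (Yseq k)) atTop (𝓝 (charMatrix a b B Y)) :=
  tendsto_pi_nhds.2 fun q => tendsto_pi_nhds.2 fun p =>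
    ((continuous_apply q).tendsto _).comp
      (ContinuousLinearMap.tendsto_apply_of_tendsto_pointwise hB (hY p.1 p.2))

theorem kernel_cokernel_of_characteristic_matrices_semicontinuous_general
    (a b : ℝ) (m r l : ℕ)
    (A : Fin r → ℝ → Matrix (Fin m) (Fin m) ℂ) (hA : ∀ j, Continuous (A j))
    (Aseq : ℕ → Fin r → ℝ → Matrix (Fin m) (Fin m) ℂ)
    (hAconv : ∀ j, TendstoUniformlyOn (fun k t => Aseq k j t) (A j)
      Filter.atTop (Set.Icc a b))
    (Y : Fin r → ℝ → Matrix (Fin m) (Fin m) ℂ)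
    (Yseq : ℕ → Fin r → ℝ → Matrix (Fin m) (Fin m) ℂ)
    (hYsmooth : ∀ i, ContDiff ℝ r (Y i))
    (hYseqsmooth : ∀ k i, ContDiff ℝ r (Yseq k i))
    (hYode : ∀ i t, iteratedDeriv r (Y i) t +
        ∑ j : Fin r, A j t * iteratedDeriv (j : ℕ) (Y i) t = 0)
    (hYseqode : ∀ k i t, iteratedDeriv r (Yseq k i) t +
        ∑ j : Fin r, Aseq k j t * iteratedDeriv (j : ℕ) (Yseq k i) t = 0)
    (hYinit : ∀ i j : Fin r,
        iteratedDeriv (j : ℕ) (Y i) a = if i = j then (1 : Matrix (Fin m) (Fin m) ℂ) else 0)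
    (hYseqinit : ∀ k, ∀ i j : Fin r,
        iteratedDeriv (j : ℕ) (Yseq k i) a =
          if i = j then (1 : Matrix (Fin m) (Fin m) ℂ) else 0)
    (B : C(Set.Icc a b, Fin r × Fin m → ℂ) →L[ℂ] (Fin l → ℂ))
    (Bseq : ℕ → C(Set.Icc a b, Fin r × Fin m → ℂ) →L[ℂ] (Fin l → ℂ))
    (hBconv : ∀ u, Filter.Tendsto (fun k => Bseq k u) Filter.atTop (nhds (B u))) :
    ∀ᶠ k in Filter.atTop,
      Module.finrank ℂ (LinearMap.ker (charMatrix a b (Bseq k) (Yseq k)).mulVecLin) ≤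
        Module.finrank ℂ (LinearMap.ker (charMatrix a b B Y).mulVecLin) ∧
      Module.finrank ℂ
          ((Fin l → ℂ) ⧸ LinearMap.range (charMatrix a b (Bseq k) (Yseq k)).mulVecLin) ≤
        Module.finrank ℂ ((Fin l → ℂ) ⧸ LinearMap.range (charMatrix a b B Y).mulVecLin) := by
  have hjet : ∀ i, TendstoUniformlyOn (fun k => jet r (Yseq k i)) (jet r (Y i)) atTop (Icc a b) :=
    fun i => tendstoUniformlyOn_jet hA hAconv (hYsmooth i) (fun k => hYseqsmooth k i) (hYode i)
      (fun k => hYseqode k i) fun k j => by rw [hYseqinit, hYinit]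
  have hM := tendsto_charMatrix hBconv fun i =>
    tendsto_jetCM_col (hYsmooth i) (fun k => hYseqsmooth k i) (hjet i)
  filter_upwards [Matrix.eventually_rank_le_of_tendsto hM] with k hk
  exact ⟨Matrix.finrank_ker_mulVecLin_le_of_rank_le hk,
    Matrix.finrank_quotient_range_mulVecLin_le_of_rank_le hk⟩

/-- Under the hypotheses of the convergence theorem for characteristic matrices
(uniform convergence of the coefficients on `[a,b]` and strong convergence of the
boundary operators), for all sufficiently large `k` the kernel and cokernel
dimensions of the characteristic matrix `M_k` are bounded by those of `M`. -/
theorem kernel_cokernel_of_characteristic_matrices_semicontinuous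
    (a b : ℝ) (hab : a < b) (m r l : ℕ) (hm : 0 < m) (hr : 0 < r) (hl : 0 < l)
    (A : Fin r → ℝ → Matrix (Fin m) (Fin m) ℂ) (hA : ∀ j, Continuous (A j))
    (Aseq : ℕ → Fin r → ℝ → Matrix (Fin m) (Fin m) ℂ)
    (hAseq : ∀ k j, Continuous (Aseq k j))
    (hAconv : ∀ j, TendstoUniformlyOn (fun k t => Aseq k j t) (A j)
      Filter.atTop (Set.Icc a b))
    (Y : Fin r → ℝ → Matrix (Fin m) (Fin m) ℂ)
    (Yseq : ℕ → Fin r → ℝ → Matrix (Fin m) (Fin m) ℂ)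
    (hYsmooth : ∀ i, ContDiff ℝ r (Y i))
    (hYseqsmooth : ∀ k i, ContDiff ℝ r (Yseq k i))
    (hYode : ∀ i t, iteratedDeriv r (Y i) t +
        ∑ j : Fin r, A j t * iteratedDeriv (j : ℕ) (Y i) t = 0)
    (hYseqode : ∀ k i t, iteratedDeriv r (Yseq k i) t +
        ∑ j : Fin r, Aseq k j t * iteratedDeriv (j : ℕ) (Yseq k i) t = 0)
    (hYinit : ∀ i j : Fin r,
        iteratedDeriv (j : ℕ) (Y i) a = if i = j then (1 : Matrix (Fin m) (Fin m) ℂ) else 0)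
    (hYseqinit : ∀ k, ∀ i j : Fin r,
        iteratedDeriv (j : ℕ) (Yseq k i) a =
          if i = j then (1 : Matrix (Fin m) (Fin m) ℂ) else 0)
    (B : C(Set.Icc a b, Fin r × Fin m → ℂ) →L[ℂ] (Fin l → ℂ))
    (Bseq : ℕ → C(Set.Icc a b, Fin r × Fin m → ℂ) →L[ℂ] (Fin l → ℂ))
    (hBconv : ∀ u, Filter.Tendsto (fun k => Bseq k u) Filter.atTop (nhds (B u))) :
    ∀ᶠ k in Filter.atTop,
      Module.finrank ℂ (LinearMap.ker (charMatrix a b (Bseq k) (Yseq k)).mulVecLin) ≤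
        Module.finrank ℂ (LinearMap.ker (charMatrix a b B Y).mulVecLin) ∧
      Module.finrank ℂ
          ((Fin l → ℂ) ⧸ LinearMap.range (charMatrix a b (Bseq k) (Yseq k)).mulVecLin) ≤
        Module.finrank ℂ ((Fin l → ℂ) ⧸ LinearMap.range (charMatrix a b B Y).mulVecLin) :=
  kernel_cokernel_of_characteristic_matrices_semicontinuous_general a b m r l A hA Aseq hAconv Y
    Yseq hYsmooth hYseqsmooth hYode hYseqode hYinit hYseqinit B Bseq hBconv
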